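/- arXiv:1203.3217 — 3 statements merged into one kernel-verified Lean document; each statement's English description precedes it below -/
import Mathlib

section
/- For any two pmfs p_X and p_{X̂} on the same finite alphabet X with at least 2 elements, the absolute difference of their Shannon entropies satisfies |H(X) - H(X̂)| ≤ d·log(|X| - 1) + h_b(d), where d is the total variation distance between p_X and p_{X̂} and h_b is the binary entropy function. -/
/-!
Write `p = m + u` and `q = m + v` with `m = min p q`, so that `∑ u = ∑ v = d`. Subadditivity of
`η(x) = -x log x` together with `log q ≤ 0` gives `H(p) - H(q) ≤ ∑ η(u) + ∑ m log (q / m)`. By the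
log-sum inequality the second sum is at most `η(1 - d)`, and since `u` vanishes at a point where
`p ≤ q`, the same inequality against the uniform weights bounds the first by
`d log (|X| - 1) + η(d)`.
-/

open Finset

/-- Total variation distance between two pmfs on a finite set: half the ℓ¹ distance. -/
noncomputable def TV {α : Type*} [Fintype α] (p q : α → ℝ) : ℝ :=
  (∑ a, |p a - q a|) / 2

/-- Shannon entropy of a pmf. -/
noncomputable def ent {α : Type*} [Fintype α] (p : α → ℝ) : ℝ :=
  -∑ a, p a * Real.log (p a)

/-- Binary entropy function. -/
noncomputable def hb (t : ℝ) : ℝ := -t * Real.log t - (1 - t) * Real.log (1 - t)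

/-- `p` is a probability mass function. -/
def IsPMF {α : Type*} [Fintype α] (p : α → ℝ) : Prop :=
  (∀ a, 0 ≤ p a) ∧ ∑ a, p a = 1

/-- Pushforward pmf (distribution of the random variable `X` under `μ`). -/
noncomputable def pushf {Ω α : Type*} [Fintype Ω] [DecidableEq α]
    (μ : Ω → ℝ) (X : Ω → α) : α → ℝ :=
  fun a => ∑ ω ∈ Finset.univ.filter (fun ω => X ω = a), μ ω

/-- Entropy of a random variable `X` on a finite probability space with pmf `μ`. -/
noncomputable def Hent {Ω α : Type*} [Fintype Ω] [Fintype α] [DecidableEq α]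
    (μ : Ω → ℝ) (X : Ω → α) : ℝ := ent (pushf μ X)

/-- Conditional mutual information `I(A ; C | B)` of random variables on a finite
probability space with pmf `μ`, defined via entropies:
`I(A;C|B) = H(A,B) + H(B,C) - H(A,B,C) - H(B)`. -/
noncomputable def condMI {Ω α β γ : Type*} [Fintype Ω] [Fintype α] [Fintype β] [Fintype γ]
    [DecidableEq α] [DecidableEq β] [DecidableEq γ]
    (μ : Ω → ℝ) (A : Ω → α) (B : Ω → β) (C : Ω → γ) : ℝ :=
  Hent μ (fun ω => (A ω, B ω)) + Hent μ (fun ω => (B ω, C ω))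
    - Hent μ (fun ω => (A ω, B ω, C ω)) - Hent μ B

open Real

lemma negMulLog_add_le {s t : ℝ} (hs : 0 ≤ s) (ht : 0 ≤ t) :
    negMulLog (s + t) ≤ negMulLog s + negMulLog t := by
  have mul_log_le : ∀ {a b : ℝ}, 0 ≤ a → 0 ≤ b → a * log a ≤ a * log (a + b) := by
    intro a b ha hb
    rcases ha.eq_or_lt with rfl | ha
    · simp
    · exact mul_le_mul_of_nonneg_left (log_le_log ha (by linarith)) ha.le
  have hs' := mul_log_le hs ht
  have ht' := mul_log_le ht hs
  rw [add_comm t s] at ht'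
  simp only [negMulLog]
  linarith

/-- `log x ≤ x - 1` at `x = b / (a c)`, multiplied by `a`. -/
lemma negMulLog_add_mul_log_le {a b c : ℝ} (ha : 0 ≤ a) (hb : 0 ≤ b) (hab : b = 0 → a = 0)
    (hc : 0 < c) : negMulLog a + a * log b ≤ a * log c + b / c - a := by
  rcases ha.eq_or_lt with rfl | ha
  · simpa using div_nonneg hb hc.le
  have hb : 0 < b := hb.lt_of_ne fun h => ha.ne' (hab h.symm)
  have hlog := log_le_sub_one_of_pos (show 0 < b / (a * c) by positivity)
  rw [log_div hb.ne' (by positivity), log_mul ha.ne' hc.ne'] at hlog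
  have hmul := mul_le_mul_of_nonneg_left hlog ha.le
  have hcancel : a * (b / (a * c)) = b / c := by field_simp
  simp only [negMulLog]
  nlinarith

/-- The log-sum inequality. -/
theorem sum_negMulLog_add_mul_log_le {ι : Type*} (s : Finset ι) {m q : ι → ℝ}
    (hm : ∀ i ∈ s, 0 ≤ m i) (hq : ∀ i ∈ s, 0 ≤ q i) (hmq : ∀ i ∈ s, q i = 0 → m i = 0) :
    ∑ i ∈ s, (negMulLog (m i) + m i * log (q i)) ≤
      negMulLog (∑ i ∈ s, m i) + (∑ i ∈ s, m i) * log (∑ i ∈ s, q i) := by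
  set M := ∑ i ∈ s, m i
  set Q := ∑ i ∈ s, q i
  rcases (sum_nonneg hm).eq_or_lt with hM | hM
  · have hm0 : ∀ i ∈ s, m i = 0 := (sum_eq_zero_iff_of_nonneg hm).1 hM.symm
    rw [show M = 0 from hM.symm, sum_eq_zero fun i hi => by simp [hm0 i hi]]
    simp
  obtain ⟨j, hj, hmj⟩ := exists_ne_zero_of_sum_ne_zero hM.ne'
  have hQ : 0 < Q :=
    ((hq j hj).lt_of_ne fun h => hmj (hmq j hj h.symm)).trans_le (single_le_sum hq hj)
  calc ∑ i ∈ s, (negMulLog (m i) + m i * log (q i))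
      ≤ ∑ i ∈ s, (m i * log (Q / M) + q i / (Q / M) - m i) :=
        sum_le_sum fun i hi =>
          negMulLog_add_mul_log_le (hm i hi) (hq i hi) (hmq i hi) (by positivity)
    _ = M * log (Q / M) + Q / (Q / M) - M := by
        rw [sum_sub_distrib, sum_add_distrib, ← sum_mul, ← sum_div]
    _ = negMulLog M + M * log Q := by
        rw [log_div hQ.ne' hM.ne', negMulLog]
        field_simp
        ring

theorem sum_negMulLog_le {ι : Type*} (s : Finset ι) {u : ι → ℝ} (hu : ∀ i ∈ s, 0 ≤ u i) :
    ∑ i ∈ s, negMulLog (u i) ≤ (∑ i ∈ s, u i) * log #s + negMulLog (∑ i ∈ s, u i) := by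
  simpa [add_comm] using
    sum_negMulLog_add_mul_log_le s (q := fun _ => 1) hu (fun _ _ => zero_le_one) (by simp)

theorem sum_negMulLog_le_of_apply_eq_zero {ι : Type*} [Fintype ι] {u : ι → ℝ}
    (hu : ∀ i, 0 ≤ u i) {y : ι} (hy : u y = 0) :
    ∑ i, negMulLog (u i) ≤
      (∑ i, u i) * log ((Fintype.card ι : ℝ) - 1) + negMulLog (∑ i, u i) := by
  classical
  have := sum_negMulLog_le (univ.erase y) fun i _ => hu i
  rwa [sum_erase _ (by simp [hy]), sum_erase _ hy, card_erase_of_mem (mem_univ y), card_univ,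
    Nat.cast_pred (Fintype.card_pos_iff.2 ⟨y⟩)] at this

lemma ent_eq_sum_negMulLog {α : Type*} [Fintype α] (p : α → ℝ) :
    ent p = ∑ a, negMulLog (p a) := by
  simp [ent, negMulLog, sum_neg_distrib]

lemma hb_eq_negMulLog_add (t : ℝ) : hb t = negMulLog t + negMulLog (1 - t) := by
  simp only [hb, negMulLog]
  ring

lemma sum_min_eq_sub_TV {α : Type*} [Fintype α] (p q : α → ℝ) :
    ∑ a, min (p a) (q a) = (∑ a, p a + ∑ a, q a) / 2 - TV p q := by
  have two_min : ∀ a, min (p a) (q a) = (p a + q a - |p a - q a|) / 2 := fun a => by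
    linarith [min_add_max (p a) (q a), max_sub_min_eq_abs' (p a) (q a)]
  simp only [two_min, TV, ← sum_div, sum_sub_distrib, sum_add_distrib]
  ring

lemma IsPMF.le_one {α : Type*} [Fintype α] {p : α → ℝ} (hp : IsPMF p) (a : α) : p a ≤ 1 :=
  hp.2 ▸ single_le_sum (fun b _ => hp.1 b) (mem_univ a)

lemma negMulLog_sub_negMulLog_le {x y z : ℝ} (hz : 0 ≤ z) (hzx : z ≤ x) (hzy : z ≤ y)
    (hy : y ≤ 1) : negMulLog x - negMulLog y ≤ negMulLog (x - z) + (negMulLog z + z * log y) := by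
  have hsub := negMulLog_add_le hz (sub_nonneg.2 hzx)
  rw [add_sub_cancel] at hsub
  have := mul_le_mul_of_nonpos_right hzy (log_nonpos (hz.trans hzy) hy)
  simp only [negMulLog] at hsub ⊢
  linarith

lemma ent_sub_ent_le {α : Type*} [Fintype α] {p q : α → ℝ} (hp : IsPMF p) (hq : IsPMF q) :
    ent p - ent q ≤ TV p q * log ((Fintype.card α : ℝ) - 1) + hb (TV p q) := by
  set d := TV p q
  set m : α → ℝ := fun a => min (p a) (q a)
  have hm0 : ∀ a, 0 ≤ m a := fun a => le_min (hp.1 a) (hq.1 a)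
  have hm : ∑ a, m a = 1 - d := by rw [sum_min_eq_sub_TV, hp.2, hq.2]; ring
  have hexcess_sum : ∑ a, (p a - m a) = d := by rw [sum_sub_distrib, hp.2, hm]; ring
  have gibbs : ∑ a, (negMulLog (m a) + m a * log (q a)) ≤ negMulLog (1 - d) := by
    simpa [hm, hq.2] using sum_negMulLog_add_mul_log_le univ (m := m) (fun a _ => hm0 a)
      (fun a _ => hq.1 a) (fun a _ h => le_antisymm (h ▸ min_le_right _ _) (hm0 a))
  obtain ⟨y, -, hy⟩ := exists_le_of_sum_le (nonempty_of_sum_ne_zero (hp.2.trans_ne one_ne_zero))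
    (hp.2.trans hq.2.symm).le
  have hy0 : p y - m y = 0 := by simp [m, min_eq_left hy]
  have hexcess :
      ∑ a, negMulLog (p a - m a) ≤ d * log ((Fintype.card α : ℝ) - 1) + negMulLog d := by
    rw [← hexcess_sum]
    exact sum_negMulLog_le_of_apply_eq_zero (u := fun a => p a - m a)
      (fun a => sub_nonneg.2 (min_le_left _ _)) hy0
  calc ent p - ent q = ∑ a, (negMulLog (p a) - negMulLog (q a)) := by
        simp only [ent_eq_sum_negMulLog, sum_sub_distrib]
    _ ≤ ∑ a, negMulLog (p a - m a) + ∑ a, (negMulLog (m a) + m a * log (q a)) := by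
        rw [← sum_add_distrib]
        exact sum_le_sum fun a _ => negMulLog_sub_negMulLog_le (hm0 a) (min_le_left _ _)
          (min_le_right _ _) (hq.le_one a)
    _ ≤ d * log ((Fintype.card α : ℝ) - 1) + negMulLog d + negMulLog (1 - d) :=
        add_le_add hexcess gibbs
    _ = d * log ((Fintype.card α : ℝ) - 1) + hb d := by rw [hb_eq_negMulLog_add]; ring

theorem entropy_tv_bound_general {α : Type*} [Fintype α]
    (p q : α → ℝ) (hp : IsPMF p) (hq : IsPMF q) :
    |ent p - ent q| ≤ TV p q * Real.log ((Fintype.card α : ℝ) - 1) + hb (TV p q) := by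
  have hTV : TV q p = TV p q := by simp only [TV, abs_sub_comm]
  refine abs_sub_le_iff.2 ⟨ent_sub_ent_le hp hq, ?_⟩
  simpa [hTV] using ent_sub_ent_le hq hp

/-- Entropy continuity bound (modified Csiszár–Körner Lemma 2.7):
for pmfs `p, q` on a finite alphabet with at least 2 elements,
`|H(p) - H(q)| ≤ d·log(|X| - 1) + h_b(d)` where `d = TV(p,q)`. -/
theorem entropy_tv_bound {α : Type*} [Fintype α]
    (p q : α → ℝ) (hp : IsPMF p) (hq : IsPMF q)
    (hcard : 2 ≤ Fintype.card α) :
    |ent p - ent q| ≤ TV p q * Real.log ((Fintype.card α : ℝ) - 1) + hb (TV p q) :=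
  entropy_tv_bound_general p q hp hq
end

section
/- Let p_Y be a pmf on a finite set Y, and let p_{X|Y}, p_{X̂|Y} be two conditional pmfs on a finite alphabet X (with |X| ≥ 2). Then |H(X|Y) - H(X̂|Y)| ≤ d·log(|X| - 1) + h_b(d), where d is the total variation distance between the joint pmfs p_Y p_{X|Y} and p_Y p_{X̂|Y}, H(·|Y) denotes conditional entropy under the respective joint distribution, and h_b is the binary entropy function. -/
open Finset

/-!
Write `φ x = -x log x` and split `p = m + g` with `m = min p q`, so that `∑ m = 1 - d`,
`∑ g = d`, and `g` vanishes on some letter (one where `p ≤ q`). Subadditivity of `φ` gives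
`H(p) ≤ ∑ φ m + ∑ φ g`. Bounding `φ` by its tangent lines (Gibbs' inequality) gives
`∑ φ g ≤ φ d + d log (|X| - 1)`, as `g` lives on `|X| - 1` letters, and
`∑ φ m ≤ φ (1 - d) + H(q)`, as `m ≤ q`. Since `φ d + φ (1 - d) = h_b d`, this is the
unconditional bound. Averaged over `y`, the conditional total variations average to the joint one,
and Jensen for the concave `h_b` finishes the proof.
-/

open Real

lemma hb_eq_binEntropy : hb = binEntropy := by
  funext t
  rw [binEntropy_eq_negMulLog_add_negMulLog_one_sub, hb, negMulLog, negMulLog]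
  ring

lemma negMulLog_add_le_s5 {x y : ℝ} (hx : 0 ≤ x) (hy : 0 ≤ y) :
    negMulLog (x + y) ≤ negMulLog x + negMulLog y := by
  have mul_log_le : ∀ {u v : ℝ}, 0 ≤ u → u ≤ v → u * log u ≤ u * log v := by
    intro u v hu huv
    rcases hu.eq_or_lt with rfl | hu
    · simp
    · exact mul_le_mul_of_nonneg_left (log_le_log hu huv) hu.le
  have := mul_log_le hx (le_add_of_nonneg_right hy)
  have := mul_log_le hy (le_add_of_nonneg_left hx)
  simp only [negMulLog, neg_mul]
  linarith

lemma negMulLog_le_tangent {x t : ℝ} (hx : 0 ≤ x) (ht : 0 < t) :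
    negMulLog x ≤ -x * log t + t - x := by
  have h := negMulLog_le_one_sub_self (div_nonneg hx ht.le)
  rw [div_eq_mul_inv, negMulLog_mul, negMulLog, negMulLog, log_inv] at h
  have := mul_le_mul_of_nonneg_left h ht.le
  field_simp at this
  rw [negMulLog]
  linarith

lemma sum_negMulLog_le_negMulLog_sum_add_mul_log_card {ι : Type*} (s : Finset ι) {g : ι → ℝ}
    (hg : ∀ a ∈ s, 0 ≤ g a) :
    ∑ a ∈ s, negMulLog (g a) ≤ negMulLog (∑ a ∈ s, g a) + (∑ a ∈ s, g a) * log #s := by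
  set c := ∑ a ∈ s, g a
  rcases (show 0 ≤ c from sum_nonneg hg).eq_or_lt with hc | hc
  · have hg0 := (sum_eq_zero_iff_of_nonneg hg).1 hc.symm
    have : ∑ a ∈ s, negMulLog (g a) = 0 := sum_eq_zero fun a ha => by rw [hg0 a ha, negMulLog_zero]
    simp [this, ← hc]
  have hn : (0 : ℝ) < #s := by exact_mod_cast (nonempty_of_sum_ne_zero hc.ne').card_pos
  calc ∑ a ∈ s, negMulLog (g a) ≤ ∑ a ∈ s, (-g a * log (c / #s) + c / #s - g a) :=
        sum_le_sum fun a ha => negMulLog_le_tangent (hg a ha) (div_pos hc hn)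
    _ = negMulLog c + c * log #s := by
        simp only [sum_sub_distrib, sum_add_distrib, ← sum_mul, sum_neg_distrib, sum_const,
          nsmul_eq_mul, negMulLog]
        rw [log_div hc.ne' hn.ne']
        field_simp
        ring

lemma sum_negMulLog_le_of_le {ι : Type*} [Fintype ι] {m q : ι → ℝ} (hm : ∀ a, 0 ≤ m a)
    (hmq : ∀ a, m a ≤ q a) (hq : ∑ a, q a ≤ 1) :
    ∑ a, negMulLog (m a) ≤ negMulLog (∑ a, m a) + ∑ a, negMulLog (q a) := by
  set c := ∑ a, m a
  have hq_le_one : ∀ a, q a ≤ 1 := fun a =>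
    (single_le_sum (fun b _ => (hm b).trans (hmq b)) (mem_univ a)).trans hq
  have hq_ent : 0 ≤ ∑ a, negMulLog (q a) :=
    sum_nonneg fun a _ => negMulLog_nonneg ((hm a).trans (hmq a)) (hq_le_one a)
  rcases (show 0 ≤ c from sum_nonneg fun a _ => hm a).eq_or_lt with hc | hc
  · have hm0 := (sum_eq_zero_iff_of_nonneg fun a _ => hm a).1 hc.symm
    simpa [← hc, hm0] using hq_ent
  have pointwise : ∀ a, negMulLog (m a) ≤ -m a * log c + c * q a - m a + negMulLog (q a) := by
    intro a
    rcases ((hm a).trans (hmq a)).eq_or_lt with hqa | hqa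
    · simp [le_antisymm (hqa ▸ hmq a) (hm a), ← hqa]
    have h := negMulLog_le_tangent (hm a) (mul_pos hc hqa)
    have hlog : (q a - m a) * log (q a) ≤ 0 :=
      mul_nonpos_of_nonneg_of_nonpos (sub_nonneg.2 (hmq a)) (log_nonpos hqa.le (hq_le_one a))
    rw [log_mul hc.ne' hqa.ne'] at h
    simp only [negMulLog] at h ⊢
    linarith
  calc ∑ a, negMulLog (m a) ≤ ∑ a, (-m a * log c + c * q a - m a + negMulLog (q a)) :=
        sum_le_sum fun a _ => pointwise a
    _ = negMulLog c + c * (∑ a, q a - 1) + ∑ a, negMulLog (q a) := by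
        simp only [sum_add_distrib, sum_sub_distrib, ← sum_mul, ← mul_sum, sum_neg_distrib,
          negMulLog]
        ring
    _ ≤ negMulLog c + ∑ a, negMulLog (q a) := by
        linarith [mul_nonpos_of_nonneg_of_nonpos hc.le (sub_nonpos.2 hq)]

section TV

variable {α : Type*} [Fintype α]

lemma TV_comm (p q : α → ℝ) : TV p q = TV q p := by
  simp only [TV, abs_sub_comm]

lemma TV_nonneg (p q : α → ℝ) : 0 ≤ TV p q := by
  unfold TV
  positivity

lemma sum_min_eq_one_sub_TV {p q : α → ℝ} (hp : ∑ a, p a = 1) (hq : ∑ a, q a = 1) :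
    ∑ a, min (p a) (q a) = 1 - TV p q := by
  have hmin : ∀ a, min (p a) (q a) = (p a + q a - |p a - q a|) / 2 := fun a => by
    rw [← max_sub_min_eq_abs', ← min_add_max (p a) (q a)]
    ring
  simp only [hmin, ← sum_div, sum_sub_distrib, sum_add_distrib, hp, hq, TV]
  ring

lemma TV_le_one {p q : α → ℝ} (hp : IsPMF p) (hq : IsPMF q) : TV p q ≤ 1 := by
  have := sum_min_eq_one_sub_TV hp.2 hq.2
  have : 0 ≤ ∑ a, min (p a) (q a) := sum_nonneg fun a _ => le_min (hp.1 a) (hq.1 a)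
  linarith

lemma TV_joint_eq_sum_mul_TV {β : Type*} [Fintype β] {w : β → ℝ} (hw : ∀ b, 0 ≤ w b)
    (P Q : β → α → ℝ) :
    TV (fun ba : β × α => w ba.1 * P ba.1 ba.2) (fun ba : β × α => w ba.1 * Q ba.1 ba.2)
      = ∑ b, w b * TV (P b) (Q b) := by
  simp only [TV, Fintype.sum_prod_type, ← mul_sub, abs_mul, abs_of_nonneg (hw _), ← mul_sum,
    sum_div, mul_div_assoc]

end TV

lemma abs_ent_sub_ent_le {α : Type*} [Fintype α] {p q : α → ℝ} (hp : IsPMF p) (hq : IsPMF q) :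
    |ent p - ent q| ≤ TV p q * log ((Fintype.card α : ℝ) - 1) + hb (TV p q) := by
  refine abs_sub_le_iff.2 ⟨ent_sub_ent_le hp hq, ?_⟩
  simpa only [TV_comm q p] using ent_sub_ent_le hq hp

lemma sum_mul_hb_le_hb_sum {ι : Type*} [Fintype ι] {w d : ι → ℝ} (hw : IsPMF w)
    (hd : ∀ i, d i ∈ Set.Icc 0 1) :
    ∑ i, w i * hb (d i) ≤ hb (∑ i, w i * d i) := by
  rw [hb_eq_binEntropy]
  simpa only [smul_eq_mul] using
    strictConcave_binEntropy.concaveOn.le_map_sum (fun i _ => hw.1 i) hw.2 fun i _ => hd i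

theorem cond_entropy_tv_bound_general {X Y : Type*} [Fintype X] [Fintype Y]
    (pY : Y → ℝ) (W V : Y → X → ℝ)
    (hpY : IsPMF pY) (hW : ∀ y, IsPMF (W y)) (hV : ∀ y, IsPMF (V y)) :
    |(∑ y, pY y * ent (W y)) - ∑ y, pY y * ent (V y)| ≤
      TV (fun yx : Y × X => pY yx.1 * W yx.1 yx.2)
          (fun yx : Y × X => pY yx.1 * V yx.1 yx.2)
        * Real.log ((Fintype.card X : ℝ) - 1)
      + hb (TV (fun yx : Y × X => pY yx.1 * W yx.1 yx.2)
              (fun yx : Y × X => pY yx.1 * V yx.1 yx.2)) := by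
  set L := log ((Fintype.card X : ℝ) - 1)
  set d : Y → ℝ := fun y => TV (W y) (V y)
  rw [TV_joint_eq_sum_mul_TV hpY.1]
  calc |(∑ y, pY y * ent (W y)) - ∑ y, pY y * ent (V y)|
      = |∑ y, pY y * (ent (W y) - ent (V y))| := by simp only [mul_sub, sum_sub_distrib]
    _ ≤ ∑ y, pY y * |ent (W y) - ent (V y)| := by
        simpa only [abs_mul, abs_of_nonneg (hpY.1 _)] using
          abs_sum_le_sum_abs (fun y => pY y * (ent (W y) - ent (V y))) univ
    _ ≤ ∑ y, pY y * (d y * L + hb (d y)) := by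
        gcongr with y
        · exact hpY.1 y
        · exact abs_ent_sub_ent_le (hW y) (hV y)
    _ = (∑ y, pY y * d y) * L + ∑ y, pY y * hb (d y) := by
        simp only [mul_add, sum_add_distrib, sum_mul, mul_assoc]
    _ ≤ (∑ y, pY y * d y) * L + hb (∑ y, pY y * d y) := by
        gcongr
        exact sum_mul_hb_le_hb_sum hpY fun y => ⟨TV_nonneg _ _, TV_le_one (hW y) (hV y)⟩

/-- Conditional entropy continuity bound: for a pmf `pY` on `Y` and
conditional pmfs `W = p_{X|Y}`, `V = p_{X̂|Y}` on a finite alphabet `X` with `|X| ≥ 2`,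
`|H(X|Y) - H(X̂|Y)| ≤ d·log(|X|-1) + h_b(d)`, where `d` is the total variation distance
between the joint pmfs `pY·W` and `pY·V`, and `H(X|Y) = ∑_y pY(y) H(p_{X|Y=y})`. -/
theorem cond_entropy_tv_bound {X Y : Type*} [Fintype X] [Fintype Y]
    (pY : Y → ℝ) (W V : Y → X → ℝ)
    (hpY : IsPMF pY) (hW : ∀ y, IsPMF (W y)) (hV : ∀ y, IsPMF (V y))
    (hcard : 2 ≤ Fintype.card X) :
    |(∑ y, pY y * ent (W y)) - ∑ y, pY y * ent (V y)| ≤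
      TV (fun yx : Y × X => pY yx.1 * W yx.1 yx.2)
          (fun yx : Y × X => pY yx.1 * V yx.1 yx.2)
        * Real.log ((Fintype.card X : ℝ) - 1)
      + hb (TV (fun yx : Y × X => pY yx.1 * W yx.1 yx.2)
              (fun yx : Y × X => pY yx.1 * V yx.1 yx.2)) :=
  cond_entropy_tv_bound_general pY W V hpY hW hV
end

section
/- Let random variables ω, C_1,...,C_r, X_1^n, X_2^n satisfy: ω is independent of (X_1^n, X_2^n); for odd i, C_i — (ω, C_{[1:i-1]}, X_1^n) — X_2^n is a Markov chain; for even i, C_i — (ω, C_{[1:i-1]}, X_2^n) — X_1^n is a Markov chain; and (X_{1,q}, X_{2,q}) are i.i.d. across q. Then for all q ∈ [1:n] and all i ∈ [0:r], I(X_1^{1:q-1}; X_2^{q:n} | ω, C_{[1:i]}, X_1^{q:n}, X_2^{1:q-1}) = 0. -/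
/-!
By induction on the number of messages, the joint law of `(G, C_{[1:i]}, X_1^n, X_2^n)` has the
form `∏_q p(x_{1q}, x_{2q}) · f(g, c, x_1^n) · h(g, c, x_2^n)`: a message sent from side 1 is
Markov, so its law is `P(c_i | g, c_{<i}, x_1^n)`, which is absorbed into `f` (symmetrically into
`h` for side 2). Splitting the product at `q` writes the law of the triple
`(X_1^{1:q-1}, (G, C_{[1:i]}, X_1^{q:n}, X_2^{1:q-1}), X_2^{q:n})` as `F(a, b) H(b, c)`, and
such a law has vanishing conditional mutual information. Both facts rest on the identity
`I(A;C|B) = D(P_{ABC} ‖ P_{AB} P_{BC} / P_B)` and Gibbs' inequality.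
-/

open Finset

open Real InformationTheory Function

section Pushforward

variable {Ω α β : Type*} [Fintype Ω] [DecidableEq α] [DecidableEq β] (μ : Ω → ℝ)

lemma pushf_congr {X : Ω → α} {Y : Ω → β} {a : α} {b : β} (h : ∀ ω, X ω = a ↔ Y ω = b) :
    pushf μ X a = pushf μ Y b := by
  simp only [pushf, h]

lemma pushf_comp_of_injective {e : α → β} (he : Injective e) (X : Ω → α) (a : α) :
    pushf μ (fun ω => e (X ω)) (e a) = pushf μ X a :=
  pushf_congr μ fun _ => he.eq_iff

lemma pushf_nonneg (hμ : ∀ ω, 0 ≤ μ ω) (X : Ω → α) (a : α) : 0 ≤ pushf μ X a :=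
  sum_nonneg fun ω _ => hμ ω

lemma pushf_le_pushf (hμ : ∀ ω, 0 ≤ μ ω) {X : Ω → α} {Y : Ω → β} {a : α} {b : β}
    (h : ∀ ω, X ω = a → Y ω = b) : pushf μ X a ≤ pushf μ Y b :=
  sum_le_sum_of_subset_of_nonneg (fun ω => by simpa using h ω) fun ω _ _ => hμ ω

lemma le_pushf_apply (hμ : ∀ ω, 0 ≤ μ ω) (X : Ω → α) (ω : Ω) : μ ω ≤ pushf μ X (X ω) :=
  single_le_sum (f := μ) (fun ω _ => hμ ω) (by simp)

lemma sum_pushf [Fintype α] (X : Ω → α) : ∑ a, pushf μ X a = ∑ ω, μ ω :=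
  sum_fiberwise _ _ _

lemma sum_pushf_mul [Fintype α] (X : Ω → α) (g : α → ℝ) :
    ∑ a, pushf μ X a * g a = ∑ ω, μ ω * g (X ω) := by
  rw [← sum_fiberwise univ X fun ω => μ ω * g (X ω)]
  refine sum_congr rfl fun a _ => ?_
  rw [pushf, sum_mul]
  exact sum_congr rfl fun ω hω => by rw [(mem_filter.1 hω).2]

lemma pushf_eq_sum_right [Fintype β] (X : Ω → α) (Y : Ω → β) (a : α) :
    pushf μ X a = ∑ b, pushf μ (fun ω => (X ω, Y ω)) (a, b) := by
  rw [pushf, ← sum_fiberwise (univ.filter fun ω => X ω = a) Y μ]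
  simp only [pushf, filter_filter, Prod.mk.injEq]

lemma pushf_eq_sum_left [Fintype α] (X : Ω → α) (Y : Ω → β) (b : β) :
    pushf μ Y b = ∑ a, pushf μ (fun ω => (X ω, Y ω)) (a, b) := by
  rw [pushf, ← sum_fiberwise (univ.filter fun ω => Y ω = b) X μ]
  simp only [pushf, filter_filter, Prod.mk.injEq, and_comm]

lemma Hent_eq_neg_sum [Fintype α] (X : Ω → α) :
    Hent μ X = -∑ ω, μ ω * log (pushf μ X (X ω)) := by
  rw [Hent, ent, sum_pushf_mul]

lemma Hent_comp_of_injective [Fintype α] [Fintype β] {e : α → β} (he : Injective e)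
    (X : Ω → α) : Hent μ (fun ω => e (X ω)) = Hent μ X := by
  simp only [Hent_eq_neg_sum, pushf_comp_of_injective μ he]

end Pushforward

section ConditionalMutualInformation

variable {Ω α β γ : Type*} [Fintype Ω] [DecidableEq α] [DecidableEq β] [DecidableEq γ]
  (μ : Ω → ℝ) (A : Ω → α) (B : Ω → β) (C : Ω → γ)

/-- `p(a,b) p(b,c) / p(b)`; where `p(b) = 0` the junk value `0` is the right one, as then
`p(a,b) = 0`. -/
noncomputable def markovLaw (z : α × β × γ) : ℝ :=
  pushf μ (fun ω => (A ω, B ω)) (z.1, z.2.1) * pushf μ (fun ω => (B ω, C ω)) z.2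
    / pushf μ B z.2.1

variable {μ}

lemma markovLaw_nonneg (hμ : ∀ ω, 0 ≤ μ ω) (z : α × β × γ) : 0 ≤ markovLaw μ A B C z :=
  div_nonneg (mul_nonneg (pushf_nonneg μ hμ _ _) (pushf_nonneg μ hμ _ _)) (pushf_nonneg μ hμ _ _)

lemma pushf_eq_zero_of_markovLaw_eq_zero (hμ : ∀ ω, 0 ≤ μ ω) {z : α × β × γ}
    (hz : markovLaw μ A B C z = 0) : pushf μ (fun ω => (A ω, B ω, C ω)) z = 0 := by
  refine le_antisymm ?_ (pushf_nonneg μ hμ _ _)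
  obtain ⟨a, b, c⟩ := z
  rcases div_eq_zero_iff.1 hz with hz | hz
  · rcases mul_eq_zero.1 hz with hz | hz <;> rw [← hz] <;>
      exact pushf_le_pushf μ hμ fun ω h => by simp_all
  · rw [← hz]; exact pushf_le_pushf μ hμ fun ω h => by simp_all

variable [Fintype α] [Fintype β] [Fintype γ]

lemma condMI_comp_of_injective {β' : Type*} [Fintype β'] [DecidableEq β'] {e : β → β'}
    (he : Injective e) : condMI μ A (fun ω => e (B ω)) C = condMI μ A B C := by
  have h₁ := Hent_comp_of_injective μ (injective_id.prodMap he) fun ω => (A ω, B ω)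
  have h₂ := Hent_comp_of_injective μ (he.prodMap injective_id) fun ω => (B ω, C ω)
  have h₃ := Hent_comp_of_injective μ (injective_id.prodMap (he.prodMap injective_id))
    fun ω => (A ω, B ω, C ω)
  simp only [condMI, Prod.map_apply, id] at h₁ h₂ h₃ ⊢
  rw [h₁, h₂, h₃, Hent_comp_of_injective μ he]

lemma sum_markovLaw : ∑ z, markovLaw μ A B C z = ∑ ω, μ ω := by
  simp only [markovLaw, Fintype.sum_prod_type]
  rw [sum_comm, ← sum_pushf μ B]
  refine sum_congr rfl fun b _ => ?_
  simp only [← sum_div, ← sum_mul_sum, ← pushf_eq_sum_left, ← pushf_eq_sum_right]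
  exact mul_self_div_self _

lemma condMI_eq_sum_mul_log_div (hμ : ∀ ω, 0 ≤ μ ω) :
    condMI μ A B C = ∑ z, pushf μ (fun ω => (A ω, B ω, C ω)) z
      * log (pushf μ (fun ω => (A ω, B ω, C ω)) z / markovLaw μ A B C z) := by
  simp only [condMI, Hent_eq_neg_sum, sum_pushf_mul, markovLaw, ← sum_neg_distrib,
    ← sum_add_distrib, ← sum_sub_distrib]
  refine sum_congr rfl fun ω _ => ?_
  rcases (hμ ω).eq_or_lt with h | h
  · simp [← h]
  have hABC : 0 < pushf μ (fun ω => (A ω, B ω, C ω)) (A ω, B ω, C ω) :=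
    h.trans_le (le_pushf_apply μ hμ _ ω)
  have hAB : 0 < pushf μ (fun ω => (A ω, B ω)) (A ω, B ω) := h.trans_le (le_pushf_apply μ hμ _ ω)
  have hBC : 0 < pushf μ (fun ω => (B ω, C ω)) (B ω, C ω) := h.trans_le (le_pushf_apply μ hμ _ ω)
  have hB : 0 < pushf μ B (B ω) := h.trans_le (le_pushf_apply μ hμ _ ω)
  rw [log_div hABC.ne' (by positivity), log_div (by positivity) hB.ne', log_mul hAB.ne' hBC.ne']
  ring

theorem condMI_eq_zero_iff (hμ : ∀ ω, 0 ≤ μ ω) :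
    condMI μ A B C = 0 ↔ pushf μ (fun ω => (A ω, B ω, C ω)) = markovLaw μ A B C := by
  rw [condMI_eq_sum_mul_log_div A B C hμ]
  set P := pushf μ (fun ω => (A ω, B ω, C ω))
  set M := markovLaw μ A B C
  constructor
  · intro h
    have hP : ∀ z, M z = 0 → P z = 0 := fun z => pushf_eq_zero_of_markovLaw_eq_zero A B C hμ
    -- Gibbs' inequality: the terms `M klFun (P / M)` are nonnegative and sum to `0`.
    have hterm : ∀ z, M z * klFun (P z / M z) = P z * log (P z / M z) + M z - P z := by
      intro z
      rcases eq_or_ne (M z) 0 with hz | hz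
      · simp [hz, hP z hz]
      · rw [klFun]; field_simp
    have hsum : ∑ z, M z * klFun (P z / M z) = 0 := by
      simp only [hterm, sum_sub_distrib, sum_add_distrib, h, M, P, sum_markovLaw, sum_pushf]
      ring
    have hnonneg : ∀ z, 0 ≤ M z * klFun (P z / M z) := fun z =>
      mul_nonneg (markovLaw_nonneg A B C hμ z)
        (klFun_nonneg (div_nonneg (pushf_nonneg μ hμ _ _) (markovLaw_nonneg A B C hμ z)))
    funext z
    have hz := (sum_eq_zero_iff_of_nonneg fun z _ => hnonneg z).1 hsum z (mem_univ z)
    rcases eq_or_ne (M z) 0 with hM | hM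
    · rw [hM, hP z hM]
    · rw [mul_eq_zero, klFun_eq_zero_iff (div_nonneg (pushf_nonneg μ hμ _ _)
        (markovLaw_nonneg A B C hμ z)), div_eq_one_iff_eq hM] at hz
      exact hz.resolve_left hM
  · intro h
    refine sum_eq_zero fun z _ => ?_
    rw [h]
    rcases eq_or_ne (M z) 0 with hz | hz <;> simp [hz]

theorem condMI_eq_zero_of_factor (hμ : ∀ ω, 0 ≤ μ ω) (F : α → β → ℝ) (H : β → γ → ℝ)
    (hF : ∀ a b, 0 ≤ F a b) (hH : ∀ b c, 0 ≤ H b c)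
    (hfac : ∀ a b c, pushf μ (fun ω => (A ω, B ω, C ω)) (a, b, c) = F a b * H b c) :
    condMI μ A B C = 0 := by
  refine (condMI_eq_zero_iff A B C hμ).2 (funext fun ⟨a, b, c⟩ => ?_)
  have hAB : ∀ a, pushf μ (fun ω => (A ω, B ω)) (a, b) = F a b * ∑ c, H b c := fun a => by
    rw [pushf_eq_sum_right μ _ C, mul_sum]
    exact sum_congr rfl fun c _ =>
      (pushf_congr μ fun ω => by simp [Prod.ext_iff, and_assoc]).trans (hfac a b c)
  have hBC : pushf μ (fun ω => (B ω, C ω)) (b, c) = (∑ a, F a b) * H b c := by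
    rw [pushf_eq_sum_left μ A, sum_mul]
    exact sum_congr rfl fun a _ => hfac a b c
  have hB : pushf μ B b = (∑ a, F a b) * ∑ c, H b c := by
    rw [pushf_eq_sum_left μ A, sum_mul]
    exact sum_congr rfl fun a _ => hAB a
  rw [markovLaw, hfac, hAB, hBC, hB]
  rcases eq_or_ne (∑ a, F a b) 0 with h | h
  · simp [(sum_eq_zero_iff_of_nonneg fun a _ => hF a b).1 h a (mem_univ a)]
  rcases eq_or_ne (∑ c, H b c) 0 with h' | h'
  · simp [(sum_eq_zero_iff_of_nonneg fun c _ => hH b c).1 h' c (mem_univ c)]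
  field_simp

end ConditionalMutualInformation

section Factorization

variable {Ω σ σ' 𝒞 ξ₁ ξ₂ : Type*} [Fintype Ω] [DecidableEq σ] [DecidableEq σ'] [DecidableEq 𝒞]
  [DecidableEq ξ₁] [DecidableEq ξ₂] {μ : Ω → ℝ}

def LawFactorizes (μ : Ω → ℝ) (S : Ω → σ) (X₁ : Ω → ξ₁) (X₂ : Ω → ξ₂) (K : ξ₁ × ξ₂ → ℝ) :
    Prop :=
  ∃ f : σ → ξ₁ → ℝ, ∃ h : σ → ξ₂ → ℝ, (∀ s x₁, 0 ≤ f s x₁) ∧ (∀ s x₂, 0 ≤ h s x₂) ∧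
    ∀ s x₁ x₂, pushf μ (fun ω => (S ω, X₁ ω, X₂ ω)) (s, x₁, x₂) = K (x₁, x₂) * f s x₁ * h s x₂

namespace LawFactorizes

variable {S : Ω → σ} {X₁ : Ω → ξ₁} {X₂ : Ω → ξ₂} {K : ξ₁ × ξ₂ → ℝ}

lemma swap (hS : LawFactorizes μ S X₁ X₂ K) : LawFactorizes μ S X₂ X₁ (fun x => K x.swap) := by
  obtain ⟨f, h, hf, hh, hfac⟩ := hS
  refine ⟨h, f, hh, hf, fun s x₂ x₁ => ?_⟩
  rw [pushf_congr μ (Y := fun ω => (S ω, X₁ ω, X₂ ω)) (b := (s, x₁, x₂))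
    fun ω => by simp only [Prod.mk.injEq]; tauto, hfac]
  simp only [Prod.swap_prod_mk]
  ring

lemma of_comp {φ : σ' → σ} (hφ : Injective φ) {S : Ω → σ'}
    (hS : LawFactorizes μ (fun ω => φ (S ω)) X₁ X₂ K) : LawFactorizes μ S X₁ X₂ K := by
  obtain ⟨f, h, hf, hh, hfac⟩ := hS
  refine ⟨fun s => f (φ s), fun s => h (φ s), fun _ => hf _, fun _ => hh _, fun s x₁ x₂ => ?_⟩
  rw [← hfac, ← pushf_comp_of_injective μ (hφ.prodMap injective_id)]
  rfl

variable [Fintype σ]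

lemma condMI_split_eq_zero (hμ : ∀ ω, 0 ≤ μ ω) (hS : LawFactorizes μ S X₁ X₂ K)
    {α₁ β₁ α₂ β₂ : Type*} [Fintype α₁] [Fintype β₁] [Fintype α₂] [Fintype β₂]
    [DecidableEq α₁] [DecidableEq β₁] [DecidableEq α₂] [DecidableEq β₂]
    (e₁ : ξ₁ ≃ α₁ × β₁) (e₂ : ξ₂ ≃ α₂ × β₂) (K₁ : α₁ → α₂ → ℝ) (K₂ : β₁ → β₂ → ℝ)
    (hK₁ : ∀ a₁ a₂, 0 ≤ K₁ a₁ a₂) (hK₂ : ∀ b₁ b₂, 0 ≤ K₂ b₁ b₂)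
    (hK : ∀ x₁ x₂, K (x₁, x₂) = K₁ (e₁ x₁).1 (e₂ x₂).1 * K₂ (e₁ x₁).2 (e₂ x₂).2) :
    condMI μ (fun ω => (e₁ (X₁ ω)).1) (fun ω => (S ω, (e₁ (X₁ ω)).2, (e₂ (X₂ ω)).1))
      (fun ω => (e₂ (X₂ ω)).2) = 0 := by
  obtain ⟨f, h, hf, hh, hfac⟩ := hS
  refine condMI_eq_zero_of_factor _ _ _ hμ
    (fun a₁ y => K₁ a₁ y.2.2 * f y.1 (e₁.symm (a₁, y.2.1)))
    (fun y b₂ => K₂ y.2.1 b₂ * h y.1 (e₂.symm (y.2.2, b₂)))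
    (fun _ _ => mul_nonneg (hK₁ _ _) (hf _ _)) (fun _ _ => mul_nonneg (hK₂ _ _) (hh _ _))
    fun a₁ ⟨s, b₁, a₂⟩ b₂ => ?_
  rw [pushf_congr μ (Y := fun ω => (S ω, X₁ ω, X₂ ω))
      (b := (s, e₁.symm (a₁, b₁), e₂.symm (a₂, b₂))) fun ω => by
        simp only [Equiv.eq_symm_apply, Prod.ext_iff]; tauto,
    hfac, hK]
  simp only [Equiv.apply_symm_apply]
  ring

variable [Fintype 𝒞] [Fintype ξ₁] [Fintype ξ₂]

lemma extend_left (hμ : ∀ ω, 0 ≤ μ ω) (hS : LawFactorizes μ S X₁ X₂ K) {M : Ω → 𝒞}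
    (hM : condMI μ M (fun ω => (S ω, X₁ ω)) X₂ = 0) :
    LawFactorizes μ (fun ω => (M ω, S ω)) X₁ X₂ K := by
  obtain ⟨f, h, hf, hh, hfac⟩ := hS
  have hmarkov := congrFun ((condMI_eq_zero_iff _ _ _ hμ).1 hM)
  refine ⟨fun ms x₁ => pushf μ (fun ω => (M ω, S ω, X₁ ω)) (ms.1, ms.2, x₁)
      / pushf μ (fun ω => (S ω, X₁ ω)) (ms.2, x₁) * f ms.2 x₁, h ∘ Prod.snd,
    fun _ _ => mul_nonneg (div_nonneg (pushf_nonneg μ hμ _ _) (pushf_nonneg μ hμ _ _)) (hf _ _),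
    fun _ _ => hh _ _, fun ⟨m, s⟩ x₁ x₂ => ?_⟩
  have hSX : pushf μ (fun ω => ((S ω, X₁ ω), X₂ ω)) ((s, x₁), x₂)
      = pushf μ (fun ω => (S ω, X₁ ω, X₂ ω)) (s, x₁, x₂) :=
    pushf_congr μ fun ω => by simp only [Prod.mk.injEq, and_assoc]
  rw [pushf_congr μ (Y := fun ω => (M ω, (S ω, X₁ ω), X₂ ω)) (b := (m, (s, x₁), x₂))
    fun ω => by simp only [Prod.mk.injEq, and_assoc], hmarkov, markovLaw]
  dsimp only
  rw [hSX, hfac]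
  simp only [comp_apply]
  ring

lemma extend_right (hμ : ∀ ω, 0 ≤ μ ω) (hS : LawFactorizes μ S X₁ X₂ K) {M : Ω → 𝒞}
    (hM : condMI μ M (fun ω => (S ω, X₂ ω)) X₁ = 0) :
    LawFactorizes μ (fun ω => (M ω, S ω)) X₁ X₂ K :=
  (hS.swap.extend_left hμ hM).swap

end LawFactorizes

end Factorization

def piSplitAt {ι X : Type*} [LinearOrder ι] (q : ι) :
    (ι → X) ≃ ({j // j < q} → X) × ({j // q ≤ j} → X) where
  toFun x := (fun j => x j, fun j => x j)
  invFun y j := if h : j < q then y.1 ⟨j, h⟩ else y.2 ⟨j, not_lt.1 h⟩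
  left_inv x := by funext j; dsimp only; split_ifs <;> rfl
  right_inv y := by
    ext j
    · simp [j.2]
    · simp [not_lt.2 j.2]

lemma prod_eq_prod_lt_mul_prod_ge {ι M : Type*} [Fintype ι] [LinearOrder ι] [CommMonoid M]
    (q : ι) (f : ι → M) : ∏ j, f j = (∏ j : {j // j < q}, f j) * ∏ j : {j // q ≤ j}, f j := by
  rw [← Fintype.prod_subtype_mul_prod_subtype (· < q) f]
  congr 1
  exact Fintype.prod_equiv (Equiv.subtypeEquivRight fun _ => not_lt) _ _ fun _ => rfl

lemma injective_last_fst_init {𝒜 𝒞 : Type*} (i : ℕ) :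
    Injective fun s : 𝒜 × (Fin (i + 1) → 𝒞) => (s.2 (Fin.last i), s.1, Fin.init s.2) := by
  rintro ⟨g, cv⟩ ⟨g', cv'⟩ h
  simp only [Prod.mk.injEq] at h
  obtain ⟨hlast, rfl, hinit⟩ := h
  congr
  exact (Fin.snocEquiv fun _ => 𝒞).symm.injective (Prod.ext hlast hinit)

/-- Lemma on interactive Markov structure: suppose `G` (the common
randomness `ω`), `C_1,...,C_r`, and the i.i.d. source sequences `X_1^n, X_2^n` satisfy:
`G` is independent of `(X_1^n, X_2^n)`, which is i.i.d. `∼ p`; for paper-odd rounds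
(0-indexed: `Even i.val`), `C_i — (G, C_{<i}, X_1^n) — X_2^n` is a Markov chain; for
paper-even rounds (`Odd i.val`), `C_i — (G, C_{<i}, X_2^n) — X_1^n`. Then for all
`q ∈ [1:n]` and all `i ∈ [0:r]`,
`I(X_1^{1:q-1}; X_2^{q:n} | G, C_{[1:i]}, X_1^{q:n}, X_2^{1:q-1}) = 0`. -/
theorem markov_lemma_interactive {Ω 𝒜 𝒞 𝒳₁ 𝒳₂ : Type*} {n r : ℕ}
    [Fintype Ω] [Fintype 𝒜] [Fintype 𝒞] [Fintype 𝒳₁] [Fintype 𝒳₂]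
    [DecidableEq 𝒜] [DecidableEq 𝒞] [DecidableEq 𝒳₁] [DecidableEq 𝒳₂]
    (μ : Ω → ℝ) (hμ : IsPMF μ)
    (G : Ω → 𝒜) (C : Fin r → Ω → 𝒞)
    (X1 : Ω → Fin n → 𝒳₁) (X2 : Ω → Fin n → 𝒳₂)
    (p : 𝒳₁ × 𝒳₂ → ℝ) (hp : IsPMF p)
    (hiid : pushf μ (fun ω => (G ω, fun q => (X1 ω q, X2 ω q)))
      = fun z => pushf μ G z.1 * ∏ q, p (z.2 q))
    (hodd : ∀ i : Fin r, Even i.val →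
      condMI μ (C i)
        (fun ω => (G ω, (fun j : Fin i.val => C (Fin.castLE i.isLt.le j) ω), X1 ω))
        X2 = 0)
    (heven : ∀ i : Fin r, Odd i.val →
      condMI μ (C i)
        (fun ω => (G ω, (fun j : Fin i.val => C (Fin.castLE i.isLt.le j) ω), X2 ω))
        X1 = 0) :
    ∀ (q : Fin n) (i : ℕ) (hi : i ≤ r),
      condMI μ
        (fun ω => fun j : {j : Fin n // j < q} => X1 ω j.1)
        (fun ω => ((G ω, (fun j : Fin i => C (Fin.castLE hi j) ω)),
          ((fun j : {j : Fin n // q ≤ j} => X1 ω j.1),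
           (fun j : {j : Fin n // j < q} => X2 ω j.1))))
        (fun ω => fun j : {j : Fin n // q ≤ j} => X2 ω j.1) = 0 := by
  have hbase : LawFactorizes μ G X1 X2 fun x => ∏ q, p (x.1 q, x.2 q) := by
    refine ⟨fun g _ => pushf μ G g, fun _ _ => 1, fun _ _ => pushf_nonneg μ hμ.1 _ _,
      fun _ _ => zero_le_one, fun g x₁ x₂ => ?_⟩
    rw [pushf_congr μ (Y := fun ω => (G ω, fun q => (X1 ω q, X2 ω q)))
      (b := (g, fun q => (x₁ q, x₂ q))) fun ω => by
        simp only [Prod.ext_iff, funext_iff, forall_and], hiid]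
    ring
  have hstate : ∀ i (hi : i ≤ r), LawFactorizes μ
      (fun ω => (G ω, fun j : Fin i => C (Fin.castLE hi j) ω)) X1 X2
      fun x => ∏ q, p (x.1 q, x.2 q) := by
    intro i
    induction i with
    | zero => exact fun _ => hbase.of_comp Prod.fst_injective
    | succ i ih =>
      intro hi
      have hlt : i < r := hi
      refine LawFactorizes.of_comp (injective_last_fst_init i) ?_
      rcases Nat.even_or_odd i with hpar | hpar
      · refine (ih hlt.le).extend_left hμ.1 ?_
        rw [← condMI_comp_of_injective _ _ _ (Equiv.prodAssoc _ _ _).injective]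
        exact hodd ⟨i, hlt⟩ hpar
      · refine (ih hlt.le).extend_right hμ.1 ?_
        rw [← condMI_comp_of_injective _ _ _ (Equiv.prodAssoc _ _ _).injective]
        exact heven ⟨i, hlt⟩ hpar
  intro q i hi
  exact (hstate i hi).condMI_split_eq_zero hμ.1 (piSplitAt q) (piSplitAt q)
    (fun a₁ a₂ => ∏ j, p (a₁ j, a₂ j)) (fun b₁ b₂ => ∏ j, p (b₁ j, b₂ j))
    (fun _ _ => prod_nonneg fun _ _ => hp.1 _) (fun _ _ => prod_nonneg fun _ _ => hp.1 _)
    fun x₁ x₂ => prod_eq_prod_lt_mul_prod_ge q _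
end
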